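/- arXiv:1506.04306 — 6 statements merged into one kernel-verified Lean document; each statement's English description precedes it below -/
import Mathlib

section
/- Let p be a stochastic matrix on a countable set S, let t : S → (0,∞), B ⊆ S and ρ ∈ (0,1) be such that Σ_{j∈S} p(i,j)·t_j ≤ ρ·t_i for every i ∈ S∖B. Then for every i ∈ S∖B, every j ∈ S and every n ≥ 1, the taboo probability satisfies p^{(n),B}_{ij} ≤ (t_i/t_j)·ρ^n. (Lemma 4.2, first assertion.) -/
/-!
Write the drift condition as `∑ⱼ p i j t j ≤ ρ t i` for `i ∉ B`. Keeping the single term `j`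
gives the case `n = 1`. For the step, `p^{(n+1),B}_{ij} = ∑_{r ∉ B} p i r p^{(n),B}_{rj}`, and the
induction hypothesis bounds `p^{(n),B}_{rj}` by the multiple `ρ^n / t j` of `t r`, so the drift
condition at `i` absorbs the sum at the cost of one more factor `ρ`.
-/

open scoped Classical

/-- Taboo probabilities: `tabooP p B n i j` is the probability of going from `i` to `j`
in `n` steps while all intermediate states avoid the taboo set `B`. -/
noncomputable def tabooP {S : Type*} (p : S → S → ℝ) (B : Set S) : ℕ → S → S → ℝ
  | 0 => fun i j => if i = j then 1 else 0
  | 1 => fun i j => p i j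
  | n + 2 => fun i j => ∑' r : ↥Bᶜ, p i (r : S) * tabooP p B (n + 1) (r : S) j

section TabooDrift

variable {S : Type*} {p : S → S → ℝ} {B : Set S} {t : S → ℝ} {ρ : ℝ}

theorem tabooP_succ_succ (n : ℕ) (i j : S) :
    tabooP p B (n + 2) i j = ∑' r : ↥Bᶜ, p i r * tabooP p B (n + 1) r j := by
  rw [tabooP]

theorem tabooP_nonneg (hp : ∀ i j, 0 ≤ p i j) : ∀ n (i j : S), 0 ≤ tabooP p B n i j
  | 0, i, j => by rw [tabooP]; exact ite_nonneg zero_le_one le_rfl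
  | 1, i, j => hp i j
  | n + 2, i, j => by
    rw [tabooP_succ_succ]
    exact tsum_nonneg fun r => mul_nonneg (hp _ _) (tabooP_nonneg hp (n + 1) _ _)

variable {i : S} (hp : ∀ i j, 0 ≤ p i j) (ht : ∀ j, 0 < t j)
  (hsum : Summable fun j => p i j * t j) (hdrift : ∑' j, p i j * t j ≤ ρ * t i)
include hp ht hsum hdrift

theorem mul_le_of_drift (j : S) : p i j * t j ≤ ρ * t i :=
  (hsum.le_tsum j fun k _ => mul_nonneg (hp i k) (ht k).le).trans hdrift

omit hsum in
theorem nonneg_of_drift : 0 ≤ ρ := by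
  have : 0 ≤ ρ * t i := (tsum_nonneg fun j => mul_nonneg (hp i j) (ht j).le).trans hdrift
  exact nonneg_of_mul_nonneg_left this (ht i)

theorem tsum_compl_mul_le_of_drift {f : S → ℝ} {c : ℝ} (hc : 0 ≤ c) (hf0 : ∀ r, 0 ≤ f r)
    (hf : ∀ r ∉ B, f r ≤ c * t r) :
    ∑' r : ↥Bᶜ, p i r * f r ≤ c * (ρ * t i) := by
  have hle : ∀ r : ↥Bᶜ, p i r * f r ≤ c * (p i r * t r) := fun r => by
    calc p i r * f r ≤ p i r * (c * t r) := mul_le_mul_of_nonneg_left (hf r r.2) (hp _ _)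
      _ = c * (p i r * t r) := by ring
  have hsum_compl : Summable fun r : ↥Bᶜ => p i r * t r := hsum.subtype _
  calc ∑' r : ↥Bᶜ, p i r * f r
      ≤ ∑' r : ↥Bᶜ, c * (p i r * t r) :=
        (hsum_compl.mul_left c).of_nonneg_of_le (fun r => mul_nonneg (hp _ _) (hf0 _)) hle
          |>.tsum_le_tsum hle (hsum_compl.mul_left c)
    _ = c * ∑' r : ↥Bᶜ, p i r * t r := tsum_mul_left
    _ ≤ c * ∑' j, p i j * t j := by
        gcongr
        exact hsum.tsum_subtype_le _ _ fun k => mul_nonneg (hp i k) (ht k).le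
    _ ≤ c * (ρ * t i) := by gcongr

end TabooDrift

theorem tabooP_succ_le_of_drift {S : Type*} {p : S → S → ℝ} {B : Set S} {t : S → ℝ} {ρ : ℝ}
    (hp : ∀ i j, 0 ≤ p i j) (ht : ∀ j, 0 < t j)
    (hsum : ∀ i ∉ B, Summable fun j => p i j * t j)
    (hdrift : ∀ i ∉ B, ∑' j, p i j * t j ≤ ρ * t i) :
    ∀ n, ∀ i ∉ B, ∀ j, tabooP p B (n + 1) i j ≤ t i / t j * ρ ^ (n + 1)
  | 0, i, hi, j => by
    rw [zero_add, pow_one, div_mul_eq_mul_div, le_div_iff₀ (ht j), mul_comm (t i)]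
    exact mul_le_of_drift hp ht (hsum i hi) (hdrift i hi) j
  | n + 1, i, hi, j => by
    have hρ := nonneg_of_drift hp ht (hdrift i hi)
    rw [tabooP_succ_succ]
    calc ∑' r : ↥Bᶜ, p i r * tabooP p B (n + 1) r j
        ≤ ρ ^ (n + 1) / t j * (ρ * t i) := by
          refine tsum_compl_mul_le_of_drift hp ht (hsum i hi) (hdrift i hi)
            (div_nonneg (pow_nonneg hρ _) (ht j).le) (tabooP_nonneg hp (n + 1) · j) fun r hr => ?_
          calc tabooP p B (n + 1) r j ≤ t r / t j * ρ ^ (n + 1) :=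
                tabooP_succ_le_of_drift hp ht hsum hdrift n r hr j
            _ = ρ ^ (n + 1) / t j * t r := by ring
      _ = t i / t j * ρ ^ (n + 1 + 1) := by ring

theorem stmt_2_general {S : Type*} (p : S → S → ℝ)
    (hp_nonneg : ∀ i j, 0 ≤ p i j)
    (t : S → ℝ) (ht : ∀ i, 0 < t i)
    (B : Set S)
    (ρ : ℝ)
    (hsum : ∀ i ∉ B, Summable fun j => p i j * t j)
    (hWSG : ∀ i ∉ B, ∑' j, p i j * t j ≤ ρ * t i) :
    ∀ i ∉ B, ∀ j : S, ∀ n : ℕ, 1 ≤ n → tabooP p B n i j ≤ (t i / t j) * ρ ^ n := by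
  intro i hi j n hn
  obtain ⟨m, rfl⟩ := Nat.exists_eq_add_of_le' hn
  exact tabooP_succ_le_of_drift hp_nonneg ht hsum hWSG m i hi j

/-- Lemma 4.2, first assertion: under the weighted spectral gap condition with data
`(t, B, ρ)`, the taboo probabilities satisfy `p^{(n),B}_{ij} ≤ (t_i / t_j) ρ^n`. -/
theorem stmt_2 {S : Type*} [Countable S] (p : S → S → ℝ)
    (hp_nonneg : ∀ i j, 0 ≤ p i j)
    (hp_row : ∀ i, HasSum (fun j => p i j) 1)
    (t : S → ℝ) (ht : ∀ i, 0 < t i)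
    (B : Set S)
    (ρ : ℝ) (hρ0 : 0 < ρ) (hρ1 : ρ < 1)
    (hsum : ∀ i ∉ B, Summable fun j => p i j * t j)
    (hWSG : ∀ i ∉ B, ∑' j, p i j * t j ≤ ρ * t i) :
    ∀ i ∉ B, ∀ j : S, ∀ n : ℕ, 1 ≤ n → tabooP p B n i j ≤ (t i / t j) * ρ ^ n :=
  stmt_2_general p hp_nonneg t ht B ρ hsum hWSG
end

section
/- Let p be a stochastic matrix on a countable set S with stationary distribution π, and suppose there exist θ ∈ (0,1) and constants C_{ij} > 0 (i,j ∈ S) such that |p^{(m)}_{ij} − π_j| ≤ C_{ij}·θ^m for all i,j ∈ S and all m ≥ 0. Then for all finite words a = (a_0,…,a_{k−1}) ∈ S^k and b = (b_0,…,b_{l−1}) ∈ S^l with π_{b_0} > 0, and for all n ≥ k, |Σ_{c∈S^{n−k}} λ(a⌢c⌢b) − λ(a)·λ(b)| ≤ λ(a)·λ(b)·(C_{a_{k−1},b_0}/(π_{b_0}·θ^k))·θ^n. (Proposition 3.2: exponential decay of correlations of cylinder sets for the shift-invariant Markov measure, deduced from exponential convergence to the stationary distribution.) -/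
/-!
Writing `b = y :: t` and `x` for the last letter of `a`, the weight of `a ++ c ++ b` factors as
`λ(a) · p(x c₁ ⋯ cₘ y) · ∏ p(bᵢ, bᵢ₊₁)`, and summing the middle factor over all words `c` of length
`m = n - k` gives the `(m+1)`-step transition probability `p⁽ᵐ⁺¹⁾(x, y)`. Hence the correlation
equals `(λ(a) λ(b) / π_y) · (p⁽ᵐ⁺¹⁾(x, y) - π_y)`, and the hypothesis bounds the last factor by
`C_{xy} θ^(m+1) ≤ C_{xy} θ^(n-k)`.
-/

open scoped Classical

/-- `n`-step transition probabilities. -/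
noncomputable def nstep {S : Type*} (p : S → S → ℝ) : ℕ → S → S → ℝ :=
  tabooP p (∅ : Set S)

/-- Product of transition probabilities along a path starting at `a`. -/
noncomputable def chainWeight {S : Type*} (p : S → S → ℝ) : S → List S → ℝ
  | _, [] => 1
  | a, b :: rest => p a b * chainWeight p b rest

/-- Markov weight of a finite word: `λ(a₀,…,a_{k-1}) = π_{a₀} ∏ p(a_i, a_{i+1})`,
the measure of the corresponding cylinder set for the shift-invariant Markov measure. -/
noncomputable def wordWeight {S : Type*} (p : S → S → ℝ) (π : S → ℝ) : List S → ℝ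
  | [] => 0
  | a :: rest => π a * chainWeight p a rest

theorem hasSum_prod_of_nonneg {α β : Type*} {f : α × β → ℝ} (hf : 0 ≤ f) {g : α → ℝ} {s : ℝ}
    (hfib : ∀ a, HasSum (fun b => f (a, b)) (g a)) (hg : HasSum g s) : HasSum f s := by
  have hg_eq : (fun a => ∑' b, f (a, b)) = g := funext fun a => (hfib a).tsum_eq
  have hsum : Summable f :=
    (summable_prod_of_nonneg hf).2 ⟨fun a => (hfib a).summable, hg_eq ▸ hg.summable⟩
  rw [← hg.tsum_eq, ← hg_eq, ← hsum.tsum_prod' fun a => (hfib a).summable]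
  exact hsum.hasSum

theorem summable_mul_of_le_one {ι : Type*} {w f : ι → ℝ} (hw : Summable w) (hw0 : ∀ i, 0 ≤ w i)
    (hf0 : ∀ i, 0 ≤ f i) (hf1 : ∀ i, f i ≤ 1) : Summable fun i => w i * f i :=
  hw.of_nonneg_of_le (fun i => mul_nonneg (hw0 i) (hf0 i))
    fun i => mul_le_of_le_one_right (hw0 i) (hf1 i)

def consLengthEquiv (S : Type*) (m : ℕ) :
    S × {l : List S // l.length = m} ≃ {l : List S // l.length = m + 1} where
  toFun x := ⟨x.1 :: x.2.1, by simp [x.2.2]⟩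
  invFun l := (l.1.head (List.ne_nil_of_length_pos (by omega)), ⟨l.1.tail, by simp [l.2]⟩)
  left_inv _ := rfl
  right_inv := fun ⟨l, hl⟩ => by
    have hne : l ≠ [] := List.ne_nil_of_length_pos (by omega)
    exact Subtype.ext (List.cons_head_tail hne)

section MarkovChain

variable {S : Type*} {p : S → S → ℝ}

variable (p) in
theorem nstep_add_two (n : ℕ) (i j : S) :
    nstep p (n + 2) i j = ∑' r, p i r * nstep p (n + 1) r j := by
  rw [nstep, tabooP, Set.compl_empty]
  exact tsum_univ fun r => p i r * nstep p (n + 1) r j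

theorem nstep_nonneg (hp : ∀ i j, 0 ≤ p i j) : ∀ n i j, 0 ≤ nstep p n i j
  | 0, i, j => by
    change 0 ≤ ite _ _ _
    split_ifs <;> norm_num
  | 1, i, j => hp i j
  | n + 2, i, j => by
    rw [nstep_add_two]
    exact tsum_nonneg fun r => mul_nonneg (hp i r) (nstep_nonneg hp (n + 1) r j)

theorem nstep_le_one (hp : ∀ i j, 0 ≤ p i j) (hrow : ∀ i, HasSum (p i) 1) :
    ∀ n i j, nstep p n i j ≤ 1
  | 0, i, j => by
    change ite _ _ _ ≤ 1
    split_ifs <;> norm_num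
  | 1, i, j => le_hasSum (hrow i) j fun k _ => hp i k
  | n + 2, i, j => by
    rw [nstep_add_two, ← (hrow i).tsum_eq]
    refine Summable.tsum_le_tsum (fun r => mul_le_of_le_one_right (hp i r) ?_) ?_
      (hrow i).summable
    · exact nstep_le_one hp hrow (n + 1) r j
    · exact summable_mul_of_le_one (hrow i).summable (hp i) (nstep_nonneg hp (n + 1) · j)
        (nstep_le_one hp hrow (n + 1) · j)

theorem chainWeight_nonneg (hp : ∀ i j, 0 ≤ p i j) : ∀ (x : S) (l : List S), 0 ≤ chainWeight p x l
  | _, [] => zero_le_one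
  | x, y :: l => mul_nonneg (hp x y) (chainWeight_nonneg hp y l)

theorem wordWeight_nonneg (hp : ∀ i j, 0 ≤ p i j) {π : S → ℝ} (hπ : ∀ i, 0 ≤ π i) :
    ∀ l : List S, 0 ≤ wordWeight p π l
  | [] => le_rfl
  | x :: l => mul_nonneg (hπ x) (chainWeight_nonneg hp x l)

variable (p) in
theorem chainWeight_append : ∀ (x : S) (l t : List S),
    chainWeight p x (l ++ t) = chainWeight p x l * chainWeight p ((x :: l).getLast (by simp)) t
  | x, [], t => (one_mul _).symm
  | x, y :: l, t => by
    rw [List.cons_append, chainWeight, chainWeight_append y l t, chainWeight, mul_assoc,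
      List.getLast_cons_cons]

variable (p) in
theorem chainWeight_append_cons (x y : S) (c t : List S) :
    chainWeight p x (c ++ y :: t) = chainWeight p x (c ++ [y]) * chainWeight p y t := by
  rw [← List.singleton_append, ← List.append_assoc, chainWeight_append]
  congr 2
  exact List.getLast_append_singleton (x :: c)

variable (p) in
theorem wordWeight_append (π : S → ℝ) {a : List S} (ha : a ≠ []) (t : List S) :
    wordWeight p π (a ++ t) = wordWeight p π a * chainWeight p (a.getLast ha) t := by
  obtain ⟨x, l, rfl⟩ := List.exists_cons_of_ne_nil ha
  rw [List.cons_append, wordWeight, wordWeight, chainWeight_append, mul_assoc]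

theorem hasSum_chainWeight_append_singleton (hp : ∀ i j, 0 ≤ p i j)
    (hrow : ∀ i, HasSum (p i) 1) (m : ℕ) (x y : S) :
    HasSum (fun c : {l : List S // l.length = m} => chainWeight p x (c.1 ++ [y]))
      (nstep p (m + 1) x y) := by
  induction m generalizing x with
  | zero =>
    let : Unique {l : List S // l.length = 0} :=
      ⟨⟨⟨[], rfl⟩⟩, fun l => Subtype.ext (List.length_eq_zero_iff.mp l.2)⟩
    convert hasSum_unique (fun c : {l : List S // l.length = 0} => chainWeight p x (c.1 ++ [y]))
    exact (mul_one (p x y)).symm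
  | succ m ih =>
    rw [← (consLengthEquiv S m).hasSum_iff]
    refine hasSum_prod_of_nonneg (fun c => chainWeight_nonneg hp x _)
      (fun r => (ih r).mul_left (p x r)) ?_
    rw [nstep_add_two]
    exact (summable_mul_of_le_one (hrow x).summable (hp x) (nstep_nonneg hp (m + 1) · y)
      (nstep_le_one hp hrow (m + 1) · y)).hasSum

theorem hasSum_wordWeight_append_append (hp : ∀ i j, 0 ≤ p i j) (hrow : ∀ i, HasSum (p i) 1)
    (π : S → ℝ) {a : List S} (ha : a ≠ []) (m : ℕ) (y : S) (t : List S) :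
    HasSum (fun c : {l : List S // l.length = m} => wordWeight p π (a ++ c.1 ++ y :: t))
      (wordWeight p π a * chainWeight p y t * nstep p (m + 1) (a.getLast ha) y) := by
  have hterm : ∀ c : {l : List S // l.length = m}, wordWeight p π (a ++ c.1 ++ y :: t) =
      wordWeight p π a * chainWeight p y t * chainWeight p (a.getLast ha) (c.1 ++ [y]) := by
    intro c
    rw [List.append_assoc, wordWeight_append p π ha, chainWeight_append_cons]
    ring
  simp only [hterm]
  exact (hasSum_chainWeight_append_singleton hp hrow m _ y).mul_left _

end MarkovChain

theorem stmt_7_general {S : Type*} (p : S → S → ℝ)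
    (hp_nonneg : ∀ i j, 0 ≤ p i j)
    (hp_row : ∀ i, HasSum (fun j => p i j) 1)
    (π : S → ℝ) (hπ_nonneg : ∀ j, 0 ≤ π j)
    (θ : ℝ) (hθ0 : 0 < θ) (hθ1 : θ < 1)
    (C : S → S → ℝ) (hC : ∀ i j, 0 < C i j)
    (hconv : ∀ i j : S, ∀ m : ℕ, |nstep p m i j - π j| ≤ C i j * θ ^ m) :
    ∀ (a b : List S) (ha : a ≠ []) (hb : b ≠ []), 0 < π (b.head hb) →
      ∀ n : ℕ, a.length ≤ n →
        |(∑' c : {l : List S // l.length = n - a.length},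
            wordWeight p π (a ++ (c : List S) ++ b)) -
          wordWeight p π a * wordWeight p π b| ≤
        wordWeight p π a * wordWeight p π b *
          (C (a.getLast ha) (b.head hb) / (π (b.head hb) * θ ^ a.length)) * θ ^ n := by
  intro a b ha hb hπb n hn
  obtain ⟨y, t, rfl⟩ := List.exists_cons_of_ne_nil hb
  set m := n - a.length
  set x := a.getLast ha
  set W := wordWeight p π a * chainWeight p y t
  have hW : 0 ≤ W := mul_nonneg (wordWeight_nonneg hp_nonneg hπ_nonneg a)
    (chainWeight_nonneg hp_nonneg y t)
  have hCθ : C x y * θ ^ (m + 1) ≤ C x y * θ ^ m := by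
    rw [pow_succ, ← mul_assoc]
    exact mul_le_of_le_one_right (mul_nonneg (hC x y).le (pow_nonneg hθ0.le m)) hθ1.le
  have hrhs : wordWeight p π a * wordWeight p π (y :: t) *
      (C x y / (π y * θ ^ a.length)) * θ ^ n = W * (C x y * θ ^ m) := by
    have hn' : n = m + a.length := (Nat.sub_add_cancel hn).symm
    have hπy : π y ≠ 0 := hπb.ne'
    rw [hn', pow_add, wordWeight]
    field_simp
    exact mul_comm _ _
  rw [(hasSum_wordWeight_append_append hp_nonneg hp_row π ha m y t).tsum_eq, List.head_cons, hrhs,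
    wordWeight, show W * nstep p (m + 1) x y - wordWeight p π a * (π y * chainWeight p y t) =
      W * (nstep p (m + 1) x y - π y) by ring, abs_mul, abs_of_nonneg hW]
  exact mul_le_mul_of_nonneg_left ((hconv x y (m + 1)).trans hCθ) hW

/-- Proposition 3.2: exponential convergence of the `n`-step transition probabilities to the
stationary distribution implies exponential decay of correlations of cylinder sets for the
shift-invariant Markov measure. -/
theorem stmt_7 {S : Type*} [Countable S] (p : S → S → ℝ)
    (hp_nonneg : ∀ i j, 0 ≤ p i j)
    (hp_row : ∀ i, HasSum (fun j => p i j) 1)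
    (π : S → ℝ) (hπ_nonneg : ∀ j, 0 ≤ π j) (hπ_sum : HasSum π 1)
    (hπ_stat : ∀ j, HasSum (fun i => π i * p i j) (π j))
    (θ : ℝ) (hθ0 : 0 < θ) (hθ1 : θ < 1)
    (C : S → S → ℝ) (hC : ∀ i j, 0 < C i j)
    (hconv : ∀ i j : S, ∀ m : ℕ, |nstep p m i j - π j| ≤ C i j * θ ^ m) :
    ∀ (a b : List S) (ha : a ≠ []) (hb : b ≠ []), 0 < π (b.head hb) →
      ∀ n : ℕ, a.length ≤ n →
        |(∑' c : {l : List S // l.length = n - a.length},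
            wordWeight p π (a ++ (c : List S) ++ b)) -
          wordWeight p π a * wordWeight p π b| ≤
        wordWeight p π a * wordWeight p π b *
          (C (a.getLast ha) (b.head hb) / (π (b.head hb) * θ ^ a.length)) * θ ^ n :=
  stmt_7_general p hp_nonneg hp_row π hπ_nonneg θ hθ0 hθ1 C hC hconv
end

section
/- Let (f_n)_{n≥1} be a sequence of nonnegative reals with Σ_{n≥1} f_n = 1 and gcd{n ≥ 1 : f_n > 0} = 1, and suppose there are C > 0 and θ ∈ (0,1) with f_n ≤ C·θ^n for all n ≥ 1. Define the renewal sequence (u_n)_{n≥0} by u_0 = 1 and u_n = Σ_{r=1}^{n} f_r·u_{n−r} for n ≥ 1. Then μ := Σ_{n≥1} n·f_n is finite, and there exist c > 0 and θ₁ ∈ (0,1) such that |u_n − 1/μ| ≤ c·θ₁^n for all n ≥ 0. (The renewal-theoretic core of the proof of Proposition 4.3, proved via the generating-function identity P(z) = 1/(1 − F(z)) and the simple pole of P at z = 1.) -/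
/-!
On the unit disc the recursion for `u` says `∑ uₙ zⁿ = 1 / (1 - F z)`, where `F z = ∑ fₙ zⁿ`.
The exponential bound on `f` makes `F` holomorphic on a disc of radius `ρ > 1`, and aperiodicity
rules out `F z = 1` for `‖z‖ ≤ 1`, `z ≠ 1`; at `z = 1` the zero of `1 - F` is simple since
`F' 1 = μ > 0`. Hence `1 / (1 - F z) - μ⁻¹ / (1 - z)` extends holomorphically to a disc of radius
`R > 1`, and its Taylor coefficients `uₙ - 1/μ` decay geometrically by the Cauchy estimates.
-/

open Metric Filter Topology FormalMultilinearSeries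
open scoped NNReal ENNReal

theorem exists_closedBall_subset_of_isOpen {E : Type*} [NormedAddCommGroup E] [NormedSpace ℝ E]
    [ProperSpace E] {U : Set E} (hU : IsOpen U) {x : E} {r : ℝ} (hr : 0 ≤ r)
    (h : closedBall x r ⊆ U) : ∃ R, r < R ∧ closedBall x R ⊆ U := by
  obtain ⟨δ, hδ, hδU⟩ := (isCompact_closedBall x r).exists_cthickening_subset_open hU h
  exact ⟨δ + r, by linarith, by rwa [← cthickening_closedBall hδ.le hr]⟩

section PowerSeries

variable {a : ℕ → ℂ} {ρ : ℝ}

theorem exists_one_lt_summable_norm_mul_pow {C θ : ℝ} (hθ0 : 0 < θ) (hθ1 : θ < 1)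
    (ha : ∀ n, 1 ≤ n → ‖a n‖ ≤ C * θ ^ n) : ∃ ρ, 1 < ρ ∧ Summable fun n => ‖a n‖ * ρ ^ n := by
  obtain ⟨ρ, hρ1, hρθ⟩ := exists_between ((one_lt_inv₀ hθ0).mpr hθ1)
  have hρθ : ρ * θ < 1 := by rwa [← lt_div_iff₀ hθ0, one_div]
  refine ⟨ρ, hρ1, Summable.of_norm_bounded_eventually_nat
    ((summable_geometric_of_lt_one (by positivity) hρθ).mul_left C) ?_⟩
  filter_upwards [eventually_ge_atTop 1] with n hn
  calc ‖‖a n‖ * ρ ^ n‖ = ‖a n‖ * ρ ^ n := Real.norm_of_nonneg (by positivity)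
    _ ≤ C * θ ^ n * ρ ^ n := by gcongr; exact ha n hn
    _ = C * (ρ * θ) ^ n := by ring

theorem norm_mul_pow_le_of_norm_le (n : ℕ) {z : ℂ} (hz : ‖z‖ ≤ ρ) :
    ‖a n * z ^ n‖ ≤ ‖a n‖ * ρ ^ n := by
  rw [norm_mul, norm_pow]
  gcongr

theorem summable_norm_mul_pow_of_norm_le (ha : Summable fun n => ‖a n‖ * ρ ^ n) {z : ℂ}
    (hz : ‖z‖ ≤ ρ) : Summable fun n => ‖a n * z ^ n‖ :=
  ha.of_nonneg_of_le (fun _ => norm_nonneg _) fun n => norm_mul_pow_le_of_norm_le n hz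

theorem differentiableOn_tsum_mul_pow (ha : Summable fun n => ‖a n‖ * ρ ^ n) :
    DifferentiableOn ℂ (fun z => ∑' n, a n * z ^ n) (ball 0 ρ) :=
  Complex.differentiableOn_tsum_of_summable_norm ha (fun _ => by fun_prop) isOpen_ball
    fun n _ hz => norm_mul_pow_le_of_norm_le n (mem_ball_zero_iff.mp hz).le

theorem hasSum_deriv_tsum_mul_pow (ha : Summable fun n => ‖a n‖ * ρ ^ n) {z : ℂ}
    (hz : z ∈ ball 0 ρ) :
    HasSum (fun n => n * a n * z ^ (n - 1)) (deriv (fun z => ∑' n, a n * z ^ n) z) := by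
  refine (Complex.hasSum_deriv_of_summable_norm ha (fun _ => by fun_prop) isOpen_ball
    (fun n _ hw => norm_mul_pow_le_of_norm_le n (mem_ball_zero_iff.mp hw).le) hz).congr_fun
    fun n => ?_
  simp
  ring

end PowerSeries

theorem HasFPowerSeriesAt.le_radius_of_differentiableOn {E : Type*} [NormedAddCommGroup E]
    [NormedSpace ℂ E] [CompleteSpace E] {G : ℂ → E} {p : FormalMultilinearSeries ℂ ℂ E} {c : ℂ}
    {R : ℝ≥0} (hp : HasFPowerSeriesAt G p c) (hR : 0 < R)
    (hG : DifferentiableOn ℂ G (closedBall c R)) : (R : ℝ≥0∞) ≤ p.radius := by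
  rw [hp.eq_formalMultilinearSeries (hG.hasFPowerSeriesOnBall hR).hasFPowerSeriesAt]
  exact (hG.hasFPowerSeriesOnBall hR).r_le

theorem hasFPowerSeriesOnBall_ofScalars_of_norm_le {a : ℕ → ℂ} {G : ℂ → ℂ} {C : ℝ}
    (ha : ∀ n, ‖a n‖ ≤ C) (hG : ∀ z : ℂ, ‖z‖ < 1 → HasSum (fun n => a n * z ^ n) (G z)) :
    HasFPowerSeriesOnBall G (ofScalars ℂ a) 0 1 where
  r_le := (ofScalars ℂ a).le_radius_of_bound C fun n => by simpa [ofScalars_norm] using ha n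
  r_pos := one_pos
  hasSum {y} hy := by
    have hy : ‖y‖ < 1 := by
      rwa [mem_eball, edist_zero_right, enorm_eq_nnnorm, ENNReal.coe_lt_one_iff,
        ← NNReal.coe_lt_one] at hy
    simpa [ofScalars_apply_eq, mul_comm] using hG _ hy

theorem exists_norm_le_geometric_of_differentiableOn {a : ℕ → ℂ} {G : ℂ → ℂ}
    (hG : HasFPowerSeriesAt G (ofScalars ℂ a) 0) {R : ℝ} (hR : 1 < R)
    (hdiff : DifferentiableOn ℂ G (closedBall 0 R)) :
    ∃ c > 0, ∃ θ₁ : ℝ, 0 < θ₁ ∧ θ₁ < 1 ∧ ∀ n, ‖a n‖ ≤ c * θ₁ ^ n := by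
  lift R to ℝ≥0 using by linarith
  replace hR : 1 < R := by exact_mod_cast hR
  obtain ⟨s, hs1, hsR⟩ := exists_between hR
  have hrad : (s : ℝ≥0∞) < (ofScalars ℂ a).radius :=
    (ENNReal.coe_lt_coe.mpr hsR).trans_le
      (hG.le_radius_of_differentiableOn (one_pos.trans hR) hdiff)
  obtain ⟨c, hc, hcs⟩ := (ofScalars ℂ a).norm_mul_pow_le_of_lt_radius hrad
  replace hs1 : (1 : ℝ) < s := hs1
  have hs0 : (0 : ℝ) < s := by linarith
  refine ⟨c, hc, (s : ℝ)⁻¹, by positivity, inv_lt_one_of_one_lt₀ hs1, fun n => ?_⟩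
  rw [inv_pow, ← div_eq_mul_inv, le_div_iff₀ (pow_pos hs0 n)]
  simpa [ofScalars_norm] using hcs n

theorem exists_differentiableOn_inv_one_sub_sub_pole {F : ℂ → ℂ} {ρ : ℝ} {μ : ℂ} (hρ : 1 < ρ)
    (hF : DifferentiableOn ℂ F (ball 0 ρ)) (hF1 : F 1 = 1) (hF' : deriv F 1 = μ) (hμ : μ ≠ 0)
    (hroot : ∀ z ∈ closedBall (0 : ℂ) 1, F z = 1 → z = 1) :
    ∃ R, 1 < R ∧ ∃ G : ℂ → ℂ, DifferentiableOn ℂ G (closedBall 0 R) ∧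
      ∀ z ∈ closedBall (0 : ℂ) R, z ≠ 1 → G z = (1 - F z)⁻¹ - μ⁻¹ * (1 - z)⁻¹ := by
  have h1 : ball (0 : ℂ) ρ ∈ 𝓝 1 := isOpen_ball.mem_nhds (by simpa using hρ)
  set φ := dslope F 1
  have hφ : DifferentiableOn ℂ φ (ball 0 ρ) := (Complex.differentiableOn_dslope h1).mpr hF
  have hφ1 : φ 1 = μ := (dslope_same F 1).trans hF'
  have hφ_eq : ∀ z ≠ 1, φ z = (F z - 1) / (z - 1) := fun z hz =>
    (dslope_of_ne F hz).trans (by rw [slope_def_field, hF1])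
  have hφ_ne : ∀ z ∈ closedBall (0 : ℂ) 1, φ z ≠ 0 := fun z hz => by
    by_cases hz1 : z = 1
    · rwa [hz1, hφ1]
    rw [hφ_eq z hz1]
    exact div_ne_zero (sub_ne_zero.mpr fun h => hz1 (hroot z hz h)) (sub_ne_zero.mpr hz1)
  obtain ⟨R, hR1, hRsub⟩ := exists_closedBall_subset_of_isOpen
    (hφ.continuousOn.isOpen_inter_preimage isOpen_ball isOpen_compl_singleton) zero_le_one
    fun z hz => ⟨closedBall_subset_ball hρ hz, hφ_ne z hz⟩
  -- `1 / (1 - F z) - μ⁻¹ / (1 - z) = (φ z - φ 1) / ((z - 1) μ φ z)`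
  refine ⟨R, hR1, fun z => dslope φ 1 z / (μ * φ z), ?_, fun z hz hz1 => ?_⟩
  · exact (((Complex.differentiableOn_dslope h1).mpr hφ).mono fun z hz => (hRsub hz).1).div
      ((hφ.mono fun z hz => (hRsub hz).1).const_mul μ) fun z hz => mul_ne_zero hμ (hRsub hz).2
  · have hφz : φ z ≠ 0 := (hRsub hz).2
    have hz1' : z - 1 ≠ 0 := sub_ne_zero.mpr hz1
    have hFz : F z - 1 ≠ 0 := fun h => hφz (by rw [hφ_eq z hz1, h, zero_div])
    have : 1 - z ≠ 0 := by rwa [← neg_sub, neg_ne_zero]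
    have : 1 - F z ≠ 0 := by rwa [← neg_sub, neg_ne_zero]
    simp only
    rw [dslope_of_ne _ hz1, slope_def_field, hφ1, hφ_eq z hz1]
    field_simp
    ring

open scoped ComplexOrder in
theorem Complex.eq_one_of_re_eq_one {w : ℂ} (hw : ‖w‖ ≤ 1) (hre : w.re = 1) : w = 1 := by
  have hnonneg : 0 ≤ w := Complex.re_eq_norm.mp (le_antisymm (Complex.re_le_norm w) (hre ▸ hw))
  exact Complex.ext (by simpa using hre) (by simpa using (Complex.nonneg_iff.mp hnonneg).2.symm)

noncomputable def genFun (f : ℕ → ℝ) (z : ℂ) : ℂ := ∑' n, (f n : ℂ) * z ^ n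

section GenFun

variable {f : ℕ → ℝ} {z : ℂ}

theorem summable_norm_mul_pow_of_norm_le_one (hf_nonneg : ∀ n, 0 ≤ f n) (hf : Summable f)
    (hz : ‖z‖ ≤ 1) : Summable fun n => ‖(f n : ℂ) * z ^ n‖ :=
  summable_norm_mul_pow_of_norm_le (by simpa [Real.norm_of_nonneg (hf_nonneg _)] using hf) hz

theorem hasSum_genFun (hf_nonneg : ∀ n, 0 ≤ f n) (hf : Summable f) (hz : ‖z‖ ≤ 1) :
    HasSum (fun n => (f n : ℂ) * z ^ n) (genFun f z) :=
  (summable_norm_mul_pow_of_norm_le_one hf_nonneg hf hz).of_norm.hasSum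

theorem genFun_one {s : ℝ} (hf : HasSum f s) : genFun f 1 = s := by
  simpa [genFun] using (Complex.hasSum_ofReal.mpr hf).tsum_eq

theorem hasSum_deriv_genFun_one {ρ : ℝ} (hρ1 : 1 < ρ)
    (hρ : Summable fun n => ‖(f n : ℂ)‖ * ρ ^ n) :
    HasSum (fun n : ℕ => (((n : ℝ) * f n : ℝ) : ℂ)) (deriv (genFun f) 1) := by
  refine (hasSum_deriv_tsum_mul_pow hρ (mem_ball_zero_iff.mpr (by simpa using hρ1))).congr_fun
    fun n => ?_
  simp

theorem pow_eq_one_of_hasSum_mul_pow (hf_nonneg : ∀ n, 0 ≤ f n) (hf_sum : HasSum f 1)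
    (hz : ‖z‖ ≤ 1) (hFz : HasSum (fun n => (f n : ℂ) * z ^ n) 1) {n : ℕ} (hn : 0 < f n) :
    z ^ n = 1 := by
  have hpow : ∀ n, ‖z ^ n‖ ≤ 1 := fun n => by rw [norm_pow]; exact pow_le_one₀ (norm_nonneg z) hz
  have hre : HasSum (fun n => f n * (z ^ n).re) 1 := by
    simpa [Complex.mul_re] using Complex.reCLM.hasSum hFz
  have hdefect : HasSum (fun n => f n * (1 - (z ^ n).re)) 0 := by
    simpa [mul_sub] using hf_sum.sub hre
  have hterm := congrFun ((hasSum_zero_iff_of_nonneg fun n => mul_nonneg (hf_nonneg n)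
    (sub_nonneg.mpr ((Complex.re_le_norm _).trans (hpow n)))).mp hdefect) n
  refine Complex.eq_one_of_re_eq_one (hpow n) ?_
  have := (mul_eq_zero.mp hterm).resolve_left hn.ne'
  linarith

theorem eq_one_of_genFun_eq_one (hf_nonneg : ∀ n, 0 ≤ f n) (hf_sum : HasSum f 1)
    (haper : ∀ d : ℕ, (∀ n, 1 ≤ n → 0 < f n → d ∣ n) → d = 1)
    (hz : ‖z‖ ≤ 1) (hFz : genFun f z = 1) : z = 1 :=
  orderOf_eq_one_iff.mp <| haper _ fun _ _ hn => orderOf_dvd_of_pow_eq_one <|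
    pow_eq_one_of_hasSum_mul_pow hf_nonneg hf_sum hz
      (hFz ▸ hasSum_genFun hf_nonneg hf_sum.summable hz) hn

theorem one_le_tsum_nat_mul (hf0 : f 0 = 0) (hf_nonneg : ∀ n, 0 ≤ f n) (hf_sum : HasSum f 1)
    (hnf : Summable fun n : ℕ => (n : ℝ) * f n) : 1 ≤ ∑' n : ℕ, (n : ℝ) * f n :=
  hf_sum.tsum_eq ▸ hf_sum.summable.tsum_le_tsum (fun n => by
    rcases n with _ | n
    · simp [hf0]
    · exact le_mul_of_one_le_left (hf_nonneg _) (by simp)) hnf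

end GenFun

section Renewal

open Finset

variable {f u : ℕ → ℝ}

theorem renewal_mem_Icc (hf_nonneg : ∀ n, 0 ≤ f n) (hf : Summable f) (hf1 : ∑' n, f n ≤ 1)
    (hu0 : u 0 = 1) (hurec : ∀ n, 1 ≤ n → u n = ∑ r ∈ Icc 1 n, f r * u (n - r))
    (n : ℕ) : u n ∈ Set.Icc 0 1 := by
  induction n using Nat.strong_induction_on with
  | _ n ih =>
    rcases Nat.eq_zero_or_pos n with rfl | hn
    · simp [hu0]
    have ih' : ∀ r ∈ Icc 1 n, u (n - r) ∈ Set.Icc 0 1 := fun r hr =>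
      ih _ (by simp only [mem_Icc] at hr; omega)
    rw [hurec n hn]
    refine ⟨sum_nonneg fun r hr => mul_nonneg (hf_nonneg r) (ih' r hr).1, ?_⟩
    calc ∑ r ∈ Icc 1 n, f r * u (n - r)
        ≤ ∑ r ∈ Icc 1 n, f r :=
          sum_le_sum fun r hr => mul_le_of_le_one_right (hf_nonneg r) (ih' r hr).2
      _ ≤ ∑' r, f r := hf.sum_le_tsum _ fun r _ => hf_nonneg r
      _ ≤ 1 := hf1

theorem sum_antidiagonal_renewal (hf0 : f 0 = 0) (hu0 : u 0 = 1)
    (hurec : ∀ n, 1 ≤ n → u n = ∑ r ∈ Icc 1 n, f r * u (n - r)) (n : ℕ) :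
    ∑ kl ∈ antidiagonal n, f kl.1 * u kl.2 = u n - if n = 0 then 1 else 0 := by
  rw [Nat.sum_antidiagonal_eq_sum_range_succ (fun k l => f k * u l)]
  rcases Nat.eq_zero_or_pos n with rfl | hn
  · simp [hf0, hu0]
  rw [range_eq_Ico, sum_eq_sum_Ico_succ_bot (Nat.succ_pos n), hf0, zero_mul, zero_add,
    if_neg hn.ne', sub_zero, hurec n hn]
  rfl

theorem hasSum_renewal_mul_pow (hf0 : f 0 = 0) (hf_nonneg : ∀ n, 0 ≤ f n) (hf : Summable f)
    (hf1 : ∑' n, f n ≤ 1) (hu0 : u 0 = 1)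
    (hurec : ∀ n, 1 ≤ n → u n = ∑ r ∈ Icc 1 n, f r * u (n - r)) {z : ℂ} (hz : ‖z‖ < 1) :
    HasSum (fun n => (u n : ℂ) * z ^ n) (1 - genFun f z)⁻¹ := by
  have hu := renewal_mem_Icc hf_nonneg hf hf1 hu0 hurec
  have hFsum := summable_norm_mul_pow_of_norm_le_one hf_nonneg hf hz.le
  have hUsum : Summable fun n => ‖(u n : ℂ) * z ^ n‖ := by
    refine (summable_geometric_of_lt_one (norm_nonneg z) hz).of_nonneg_of_le
      (fun _ => norm_nonneg _) fun n => ?_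
    rw [norm_mul, norm_pow, Complex.norm_real, Real.norm_of_nonneg (hu n).1]
    exact mul_le_of_le_one_left (by positivity) (hu n).2
  have hconv : ∀ n, ∑ kl ∈ antidiagonal n, (f kl.1 : ℂ) * z ^ kl.1 * ((u kl.2 : ℂ) * z ^ kl.2)
      = (u n : ℂ) * z ^ n - if n = 0 then 1 else 0 := fun n => by
    calc ∑ kl ∈ antidiagonal n, (f kl.1 : ℂ) * z ^ kl.1 * ((u kl.2 : ℂ) * z ^ kl.2)
        = ((∑ kl ∈ antidiagonal n, f kl.1 * u kl.2 : ℝ) : ℂ) * z ^ n := by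
          push_cast
          rw [sum_mul]
          refine sum_congr rfl fun kl hkl => ?_
          rw [← mem_antidiagonal.mp hkl, pow_add]
          ring
      _ = (u n : ℂ) * z ^ n - if n = 0 then 1 else 0 := by
          rw [sum_antidiagonal_renewal hf0 hu0 hurec]
          split_ifs with hn <;> simp [hn]
  have hprod : genFun f z * ∑' n, (u n : ℂ) * z ^ n = ∑' n, (u n : ℂ) * z ^ n - 1 := by
    rw [genFun, tsum_mul_tsum_eq_tsum_sum_antidiagonal_of_summable_norm hFsum hUsum,
      tsum_congr hconv, (hUsum.of_norm.hasSum.sub (hasSum_ite_eq 0 1)).tsum_eq]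
  have hU : ∑' n, (u n : ℂ) * z ^ n = (1 - genFun f z)⁻¹ :=
    eq_inv_of_mul_eq_one_right (by linear_combination -hprod)
  exact hU ▸ hUsum.of_norm.hasSum

end Renewal

theorem stmt_8_general (f : ℕ → ℝ) (hf0 : f 0 = 0)
    (hf_nonneg : ∀ n, 0 ≤ f n)
    (hf_sum : HasSum f 1)
    (haper : ∀ d : ℕ, (∀ n, 1 ≤ n → 0 < f n → d ∣ n) → d = 1)
    (C : ℝ) (θ : ℝ) (hθ0 : 0 < θ) (hθ1 : θ < 1)
    (hbound : ∀ n, 1 ≤ n → f n ≤ C * θ ^ n)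
    (u : ℕ → ℝ) (hu0 : u 0 = 1)
    (hurec : ∀ n, 1 ≤ n → u n = ∑ r ∈ Finset.Icc 1 n, f r * u (n - r)) :
    Summable (fun n : ℕ => (n : ℝ) * f n) ∧
      ∃ c : ℝ, 0 < c ∧ ∃ θ₁ : ℝ, 0 < θ₁ ∧ θ₁ < 1 ∧
        ∀ n : ℕ, |u n - 1 / (∑' n : ℕ, (n : ℝ) * f n)| ≤ c * θ₁ ^ n := by
  obtain ⟨ρ, hρ1, hρ⟩ := exists_one_lt_summable_norm_mul_pow (a := fun n => (f n : ℂ)) hθ0 hθ1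
    fun n hn => by simpa [Real.norm_of_nonneg (hf_nonneg n)] using hbound n hn
  have hderiv := hasSum_deriv_genFun_one hρ1 hρ
  have hsum_nf : Summable fun n : ℕ => (n : ℝ) * f n := Complex.summable_ofReal.mp hderiv.summable
  set μ := ∑' n : ℕ, (n : ℝ) * f n
  have hμ1 : 1 ≤ μ := one_le_tsum_nat_mul hf0 hf_nonneg hf_sum hsum_nf
  obtain ⟨R, hR1, G, hG, hGeq⟩ := exists_differentiableOn_inv_one_sub_sub_pole
    (F := genFun f) hρ1 (differentiableOn_tsum_mul_pow hρ) (genFun_one hf_sum)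
    (hderiv.unique (Complex.hasSum_ofReal.mpr hsum_nf.hasSum))
    (Complex.ofReal_ne_zero.mpr (by linarith)) fun z hz =>
      eq_one_of_genFun_eq_one hf_nonneg hf_sum haper (mem_closedBall_zero_iff.mp hz)
  have hu := renewal_mem_Icc hf_nonneg hf_sum.summable hf_sum.tsum_eq.le hu0 hurec
  have hGsum : ∀ z : ℂ, ‖z‖ < 1 → HasSum (fun n => ((u n - 1 / μ : ℝ) : ℂ) * z ^ n) (G z) := by
    intro z hz
    have hz1 : z ≠ 1 := by rintro rfl; simp at hz
    rw [hGeq z (closedBall_subset_closedBall hR1.le (mem_closedBall_zero_iff.mpr hz.le)) hz1]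
    simpa [sub_mul] using (hasSum_renewal_mul_pow hf0 hf_nonneg hf_sum.summable
      hf_sum.tsum_eq.le hu0 hurec hz).sub ((hasSum_geometric_of_norm_lt_one hz).mul_left (μ : ℂ)⁻¹)
  have hbdd : ∀ n, ‖((u n - 1 / μ : ℝ) : ℂ)‖ ≤ 1 := fun n => by
    rw [Complex.norm_real, Real.norm_eq_abs]
    exact abs_sub_le_of_nonneg_of_le (hu n).1 (hu n).2 (by positivity)
      ((div_le_one (by linarith)).mpr hμ1)
  obtain ⟨c, hc, θ₁, hθ₁0, hθ₁1, hdecay⟩ := exists_norm_le_geometric_of_differentiableOn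
    (hasFPowerSeriesOnBall_ofScalars_of_norm_le hbdd hGsum).hasFPowerSeriesAt hR1 hG
  exact ⟨hsum_nf, c, hc, θ₁, hθ₁0, hθ₁1, fun n => by
    simpa only [Complex.norm_real, Real.norm_eq_abs] using hdecay n⟩

/-- Renewal-theoretic core of the proof of Proposition 4.3: for an aperiodic first-return
time distribution `(f_n)_{n ≥ 1}` with exponentially decaying tail, the associated renewal
sequence `(u_n)` converges exponentially fast to `1/μ`, where `μ = Σ_{n ≥ 1} n f_n < ∞`. -/
theorem stmt_8 (f : ℕ → ℝ) (hf0 : f 0 = 0)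
    (hf_nonneg : ∀ n, 0 ≤ f n)
    (hf_sum : HasSum f 1)
    (haper : ∀ d : ℕ, (∀ n, 1 ≤ n → 0 < f n → d ∣ n) → d = 1)
    (C : ℝ) (hC : 0 < C) (θ : ℝ) (hθ0 : 0 < θ) (hθ1 : θ < 1)
    (hbound : ∀ n, 1 ≤ n → f n ≤ C * θ ^ n)
    (u : ℕ → ℝ) (hu0 : u 0 = 1)
    (hurec : ∀ n, 1 ≤ n → u n = ∑ r ∈ Finset.Icc 1 n, f r * u (n - r)) :
    Summable (fun n : ℕ => (n : ℝ) * f n) ∧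
      ∃ c : ℝ, 0 < c ∧ ∃ θ₁ : ℝ, 0 < θ₁ ∧ θ₁ < 1 ∧
        ∀ n : ℕ, |u n - 1 / (∑' n : ℕ, (n : ℝ) * f n)| ≤ c * θ₁ ^ n :=
  stmt_8_general f hf0 hf_nonneg hf_sum haper C θ hθ0 hθ1 hbound u hu0 hurec
end

section
/- Let p be an irreducible stochastic matrix on a countable set S admitting a stationary distribution π. Then for every pair of states b₀, j ∈ S, π_j = π_{b₀} · Σ_{n=1}^{∞} p^{(n),{b₀}}_{b₀ j}; that is, π_j/π_{b₀} equals the expected number of visits to j during an excursion from b₀ back to b₀. (Identity used in the proof of Proposition 4.3.) -/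
/-!
Work in `ℝ≥0∞`, where all series converge and can be rearranged freely. Splitting the
stationarity equation `π = πp` according to whether the state one step earlier is `b₀` gives
`π_j = π_{b₀} ∑_{n ≤ N} p^{(n+1),{b₀}}_{b₀ j} + R_N(j)` with
`R_N(j) = ∑_{i ≠ b₀} π_i p^{(N+1),{b₀}}_{i j}`, and `R_N(j)` is at most the stationary
probability `c_N` of avoiding `b₀` at times `0, …, N`. The same splitting gives
`c_N = π_{b₀} s_{N+1}(b₀) + c_{N+1}`, where `s_n(i)` is the probability of avoiding `b₀` at
times `1, …, n` when starting from `i`. Since `π_{b₀} > 0` by irreducibility, `∑ s_n(b₀) < ∞`, so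
`s_n(b₀) → 0`; irreducibility transfers this to every starting state, and monotone convergence
for decreasing series gives `c_N → 0`.
-/

open scoped Classical

open scoped ENNReal

namespace ENNReal

theorem tsum_ofReal_eq_of_hasSum {α : Type*} {f : α → ℝ} {x : ℝ} (hf : ∀ a, 0 ≤ f a)
    (h : HasSum f x) : ∑' a, ENNReal.ofReal (f a) = ENNReal.ofReal x := by
  rw [← ENNReal.ofReal_tsum_of_nonneg hf h.summable, h.tsum_eq]

theorem tsum_eq_add_tsum_compl_singleton {α : Type*} (f : α → ℝ≥0∞) (a : α) :
    ∑' x, f x = f a + ∑' x : ↥({a}ᶜ : Set α), f x := by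
  rw [← Summable.tsum_add_tsum_compl (s := {a}) ENNReal.summable ENNReal.summable,
    tsum_singleton]

theorem tsum_iInf_of_antitone {α : Type*} {f : ℕ → α → ℝ≥0∞} (hf : Antitone f)
    (h0 : ∑' a, f 0 a ≠ ∞) : ∑' a, ⨅ n, f n a = ⨅ n, ∑' a, f n a := by
  let _ : MeasurableSpace α := ⊤
  have h := MeasureTheory.lintegral_iInf (μ := MeasureTheory.Measure.count)
    (fun n => measurable_from_top) hf
    (by rwa [MeasureTheory.lintegral_count' measurable_from_top])
  simpa only [MeasureTheory.lintegral_count' measurable_from_top] using h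

theorem eq_tsum_add_iInf_of_eq_add {u v : ℕ → ℝ≥0∞} (h : ∀ n, u n = v n + u (n + 1)) :
    u 0 = ∑' n, v n + ⨅ n, u n := by
  have partial_sums : ∀ N, u 0 = ∑ n ∈ Finset.range N, v n + u N := by
    intro N
    induction N with
    | zero => simp
    | succ N ih => rw [ih, h N, Finset.sum_range_succ, add_assoc]
  refine le_antisymm ?_ ?_
  · rw [ENNReal.add_iInf]
    refine le_iInf fun N => (partial_sums N).le.trans ?_
    gcongr
    exact ENNReal.sum_le_tsum _
  · rw [ENNReal.tsum_eq_iSup_nat, ENNReal.iSup_add]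
    refine iSup_le fun N => (partial_sums N).ge.trans' ?_
    gcongr
    exact iInf_le _ N

end ENNReal

namespace Excursion

variable {S : Type*}

noncomputable def ennTaboo (Q : S → S → ℝ≥0∞) (B : Set S) : ℕ → S → S → ℝ≥0∞
  | 0 => fun i j => if i = j then 1 else 0
  | 1 => Q
  | n + 2 => fun i j => ∑' r : ↥Bᶜ, Q i r * ennTaboo Q B (n + 1) r j

-- The probability of staying outside `B` at times `1, …, n`.
noncomputable def survival (Q : S → S → ℝ≥0∞) (B : Set S) : ℕ → S → ℝ≥0∞
  | 0 => fun _ => 1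
  | n + 1 => fun i => ∑' r : ↥Bᶜ, Q i r * survival Q B n r

variable {Q : S → S → ℝ≥0∞} {B : Set S}

theorem survival_succ_le (hQ : ∀ i, ∑' j, Q i j ≤ 1) (n : ℕ) :
    survival Q B (n + 1) ≤ survival Q B n := by
  induction n with
  | zero =>
    intro i
    simpa [survival] using
      (ENNReal.tsum_comp_le_tsum_of_injective Subtype.val_injective (Q i)).trans (hQ i)
  | succ n ih => exact fun i => ENNReal.tsum_le_tsum fun r => mul_le_mul_right (ih r) _

theorem survival_antitone (hQ : ∀ i, ∑' j, Q i j ≤ 1) : Antitone (survival Q B) :=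
  antitone_nat_of_succ_le (survival_succ_le hQ)

theorem ennTaboo_succ_le_survival (hQ : ∀ i, ∑' j, Q i j ≤ 1) (n : ℕ) (i j : S) :
    ennTaboo Q B (n + 1) i j ≤ survival Q B n i := by
  induction n generalizing i with
  | zero => exact (ENNReal.le_tsum j).trans (hQ i)
  | succ n ih => exact ENNReal.tsum_le_tsum fun r => mul_le_mul_right (ih r) _

theorem ennTaboo_succ_ne_top (hQ : ∀ i, ∑' j, Q i j ≤ 1) (n : ℕ) (i j : S) :
    ennTaboo Q B (n + 1) i j ≠ ∞ :=
  ((ennTaboo_succ_le_survival hQ n i j).trans_lt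
    ((survival_antitone hQ (Nat.zero_le n) i).trans_lt ENNReal.one_lt_top)).ne

theorem ennTaboo_mul_survival_le {r : S} (hr : r ∉ B) (m n : ℕ) (i : S) :
    ennTaboo Q B (m + 1) i r * survival Q B n r ≤ survival Q B (n + m + 1) i := by
  induction m generalizing i with
  | zero => exact ENNReal.le_tsum (f := fun s : ↥Bᶜ => Q i s * survival Q B n s) ⟨r, hr⟩
  | succ m ih =>
    calc ennTaboo Q B (m + 2) i r * survival Q B n r
        = ∑' s : ↥Bᶜ, Q i s * (ennTaboo Q B (m + 1) s r * survival Q B n r) := by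
          simp only [ennTaboo, ← ENNReal.tsum_mul_right, mul_assoc]
      _ ≤ survival Q B (n + (m + 1) + 1) i :=
          ENNReal.tsum_le_tsum fun s => mul_le_mul_right (ih s) _

theorem exists_ennTaboo_singleton_ne_zero {b i : S} {n : ℕ}
    (h : ennTaboo Q ∅ (n + 1) b i ≠ 0) :
    ∃ m, ennTaboo Q {b} (m + 1) b i ≠ 0 := by
  -- Cut a path from `k` to `i` at its last visit to `b`, if any.
  suffices ∀ n k, ennTaboo Q ∅ (n + 1) k i ≠ 0 →
      ∃ m, ennTaboo Q {b} (m + 1) k i ≠ 0 ∨ ennTaboo Q {b} (m + 1) b i ≠ 0 by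
    simpa using this n b h
  intro n
  induction n with
  | zero => exact fun k hk => ⟨0, Or.inl hk⟩
  | succ n ih =>
    intro k hk
    obtain ⟨⟨r, _⟩, hr⟩ : ∃ r : ↥(∅ : Set S)ᶜ, Q k r * ennTaboo Q ∅ (n + 1) r i ≠ 0 := by
      by_contra! hzero
      exact hk (ENNReal.tsum_eq_zero.2 hzero)
    obtain ⟨hkr, hri⟩ := mul_ne_zero_iff.1 hr
    obtain ⟨m, hm | hm⟩ := ih r hri
    · by_cases hrb : r = b
      · exact ⟨m, Or.inr (hrb ▸ hm)⟩
      refine ⟨m + 1, Or.inl fun hzero => ?_⟩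
      exact mul_ne_zero hkr hm (ENNReal.tsum_eq_zero.1 hzero ⟨r, hrb⟩ :)
    · exact ⟨m, Or.inr hm⟩

section Stationary

variable {π : S → ℝ≥0∞}

theorem tsum_mul_tsum_compl_of_stationary (hπ : ∀ j, ∑' i, π i * Q i j = π j) (B : Set S)
    (f : S → ℝ≥0∞) : ∑' k, π k * ∑' r : ↥Bᶜ, Q k r * f r = ∑' r : ↥Bᶜ, π r * f r := by
  calc ∑' k, π k * ∑' r : ↥Bᶜ, Q k r * f r = ∑' r : ↥Bᶜ, ∑' k, π k * (Q k r * f r) := by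
        simp_rw [← ENNReal.tsum_mul_left]
        exact ENNReal.tsum_comm
    _ = ∑' r : ↥Bᶜ, π r * f r := by
        simp_rw [← mul_assoc, ENNReal.tsum_mul_right, hπ]

theorem tsum_mul_ennTaboo_empty (hπ : ∀ j, ∑' i, π i * Q i j = π j) (n : ℕ) (j : S) :
    ∑' i, π i * ennTaboo Q ∅ (n + 1) i j = π j := by
  induction n with
  | zero => exact hπ j
  | succ n ih =>
    refine (tsum_mul_tsum_compl_of_stationary hπ ∅ (ennTaboo Q ∅ (n + 1) · j)).trans ?_
    rw [tsum_subtype (∅ : Set S)ᶜ (fun r => π r * ennTaboo Q ∅ (n + 1) r j), Set.compl_empty,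
      Set.indicator_univ, ih]

theorem ne_zero_of_irreducible (hπ : ∀ j, ∑' i, π i * Q i j = π j) (hπ0 : ∑' i, π i ≠ 0)
    (hirr : ∀ i j, ∃ n, ennTaboo Q ∅ (n + 1) i j ≠ 0) (j : S) : π j ≠ 0 := by
  obtain ⟨i, hi⟩ : ∃ i, π i ≠ 0 := by simpa [ENNReal.tsum_eq_zero] using hπ0
  obtain ⟨n, hn⟩ := hirr i j
  rw [← tsum_mul_ennTaboo_empty hπ n j]
  exact (pos_iff_ne_zero.2 (mul_ne_zero hi hn)).trans_le (ENNReal.le_tsum i) |>.ne'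

theorem first_step_decomposition (hπ : ∀ j, ∑' i, π i * Q i j = π j) (b : S) (f : S → ℝ≥0∞) :
    π b * ∑' r : ↥({b}ᶜ : Set S), Q b r * f r
        + ∑' k : ↥({b}ᶜ : Set S), π k * ∑' r : ↥({b}ᶜ : Set S), Q k r * f r
      = ∑' r : ↥({b}ᶜ : Set S), π r * f r := by
  rw [← ENNReal.tsum_eq_add_tsum_compl_singleton
    (fun k => π k * ∑' r : ↥({b}ᶜ : Set S), Q k r * f r)]
  exact tsum_mul_tsum_compl_of_stationary hπ _ f

theorem tsum_mul_survival_zero_ne_top (hπ_top : ∑' i, π i ≠ ∞) (B : Set S) :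
    ∑' k : ↥Bᶜ, π k * survival Q B 0 k ≠ ∞ :=
  ne_top_of_le_ne_top hπ_top <| by
    simpa [survival] using ENNReal.tsum_comp_le_tsum_of_injective Subtype.val_injective π

theorem iInf_survival_self_eq_zero (hπ : ∀ j, ∑' i, π i * Q i j = π j)
    (hπ_top : ∑' i, π i ≠ ∞) {b : S} (hb : π b ≠ 0) :
    ⨅ n, survival Q {b} n b = 0 := by
  set c : ℕ → ℝ≥0∞ := fun n => ∑' k : ↥({b}ᶜ : Set S), π k * survival Q {b} n k
  have hc := ENNReal.eq_tsum_add_iInf_of_eq_add (u := c)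
    (v := fun n => π b * survival Q {b} (n + 1) b)
    fun n => (first_step_decomposition hπ b (survival Q {b} n)).symm
  have hc0 : c 0 ≠ ∞ := tsum_mul_survival_zero_ne_top hπ_top {b}
  have hsum : ∑' n, survival Q {b} (n + 1) b ≠ ∞ := by
    intro htop
    have : π b * ∑' n, survival Q {b} (n + 1) b ≤ c 0 := by
      rw [hc, ← ENNReal.tsum_mul_left]
      exact le_self_add
    rw [htop, ENNReal.mul_top hb, top_le_iff] at this
    exact hc0 this
  exact le_antisymm (ge_of_tendsto' (ENNReal.tendsto_atTop_zero_of_tsum_ne_top hsum)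
    fun n => iInf_le _ (n + 1)) bot_le

theorem iInf_survival_eq_zero (hQ : ∀ i, ∑' j, Q i j ≤ 1) (hπ : ∀ j, ∑' i, π i * Q i j = π j)
    (hπ0 : ∑' i, π i ≠ 0) (hπ_top : ∑' i, π i ≠ ∞)
    (hirr : ∀ i j, ∃ n, ennTaboo Q ∅ (n + 1) i j ≠ 0) (b i : S) :
    ⨅ n, survival Q {b} n i = 0 := by
  have hb := iInf_survival_self_eq_zero hπ hπ_top (ne_zero_of_irreducible hπ hπ0 hirr b)
  by_cases hib : i = b
  · rwa [hib]
  obtain ⟨n, hn⟩ := hirr b i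
  obtain ⟨m, hm⟩ := exists_ennTaboo_singleton_ne_zero hn
  have key : ennTaboo Q {b} (m + 1) b i * ⨅ n, survival Q {b} n i ≤ ⨅ n, survival Q {b} n b :=
    le_iInf fun n => calc
      _ ≤ ennTaboo Q {b} (m + 1) b i * survival Q {b} n i := mul_le_mul_right (iInf_le _ n) _
      _ ≤ survival Q {b} (n + m + 1) b := ennTaboo_mul_survival_le (B := {b}) (r := i) hib m n b
      _ ≤ survival Q {b} n b := survival_antitone hQ (by omega) b
  rw [hb, nonpos_iff_eq_zero, mul_eq_zero] at key
  exact key.resolve_left hm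

theorem iInf_tsum_mul_survival_eq_zero (hQ : ∀ i, ∑' j, Q i j ≤ 1)
    (hπ : ∀ j, ∑' i, π i * Q i j = π j) (hπ0 : ∑' i, π i ≠ 0) (hπ_top : ∑' i, π i ≠ ∞)
    (hirr : ∀ i j, ∃ n, ennTaboo Q ∅ (n + 1) i j ≠ 0) (b : S) :
    ⨅ n, ∑' k : ↥({b}ᶜ : Set S), π k * survival Q {b} n k = 0 := by
  rw [← ENNReal.tsum_iInf_of_antitone
    (f := fun n (k : ↥({b}ᶜ : Set S)) => π k * survival Q {b} n k)
    (fun m n hmn k => mul_le_mul_right (survival_antitone hQ hmn k) _)]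
  · refine ENNReal.tsum_eq_zero.2 fun k => ?_
    rw [← ENNReal.mul_iInf fun h => absurd h (ENNReal.ne_top_of_tsum_ne_top hπ_top k),
      iInf_survival_eq_zero hQ hπ hπ0 hπ_top hirr b k, mul_zero]
  · exact tsum_mul_survival_zero_ne_top hπ_top {b}

theorem eq_mul_tsum_ennTaboo (hQ : ∀ i, ∑' j, Q i j ≤ 1) (hπ : ∀ j, ∑' i, π i * Q i j = π j)
    (hπ0 : ∑' i, π i ≠ 0) (hπ_top : ∑' i, π i ≠ ∞)
    (hirr : ∀ i j, ∃ n, ennTaboo Q ∅ (n + 1) i j ≠ 0) (b j : S) :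
    π j = π b * ∑' n, ennTaboo Q {b} (n + 1) b j := by
  set R : ℕ → ℝ≥0∞ := fun n => ∑' k : ↥({b}ᶜ : Set S), π k * ennTaboo Q {b} (n + 1) k j
  have hR := ENNReal.eq_tsum_add_iInf_of_eq_add (u := R)
    (v := fun n => π b * ennTaboo Q {b} (n + 2) b j)
    fun n => (first_step_decomposition hπ b (ennTaboo Q {b} (n + 1) · j)).symm
  have hR_inf : ⨅ n, R n = 0 := by
    refine le_antisymm ?_ bot_le
    rw [← iInf_tsum_mul_survival_eq_zero hQ hπ hπ0 hπ_top hirr b]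
    exact iInf_mono fun n => ENNReal.tsum_le_tsum fun k =>
      mul_le_mul_right (ennTaboo_succ_le_survival hQ n k j) _
  calc π j = π b * Q b j + R 0 := by
        rw [← hπ j, ENNReal.tsum_eq_add_tsum_compl_singleton _ b]
        rfl
    _ = π b * ∑' n, ennTaboo Q {b} (n + 1) b j := by
        rw [hR, hR_inf, add_zero, ENNReal.tsum_mul_left, ← mul_add]
        conv_rhs => rw [tsum_eq_zero_add' ENNReal.summable]
        rfl

end Stationary

theorem tabooP_succ_eq_toReal {p : S → S → ℝ} (hp : ∀ i j, 0 ≤ p i j)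
    (hQ : ∀ i, ∑' j, ENNReal.ofReal (p i j) ≤ 1) (B : Set S) (n : ℕ) (i j : S) :
    tabooP p B (n + 1) i j =
      (ennTaboo (fun i j => ENNReal.ofReal (p i j)) B (n + 1) i j).toReal := by
  induction n generalizing i with
  | zero => exact (ENNReal.toReal_ofReal (hp i j)).symm
  | succ n ih =>
    simp only [tabooP, ennTaboo, ih]
    rw [ENNReal.tsum_toReal_eq fun r : ↥Bᶜ => ENNReal.mul_ne_top ENNReal.ofReal_ne_top
      (ennTaboo_succ_ne_top hQ n r j)]
    simp only [ENNReal.toReal_mul, ENNReal.toReal_ofReal (hp _ _)]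

end Excursion

open Excursion in
theorem stmt_9_general {S : Type*} (p : S → S → ℝ)
    (hp_nonneg : ∀ i j, 0 ≤ p i j)
    (hp_row : ∀ i, HasSum (fun j => p i j) 1)
    (hirr : ∀ i j, ∃ n, 1 ≤ n ∧ 0 < nstep p n i j)
    (π : S → ℝ) (hπ_nonneg : ∀ j, 0 ≤ π j) (hπ_sum : HasSum π 1)
    (hπ_stat : ∀ j, HasSum (fun i => π i * p i j) (π j)) :
    ∀ b₀ j : S, π j = π b₀ * ∑' n : ℕ, tabooP p ({b₀} : Set S) (n + 1) b₀ j := by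
  intro b₀ j
  set Q : S → S → ℝ≥0∞ := fun i j => ENNReal.ofReal (p i j)
  have hQ : ∀ i, ∑' j, Q i j ≤ 1 := fun i =>
    (ENNReal.tsum_ofReal_eq_of_hasSum (hp_nonneg i) (hp_row i)).trans ENNReal.ofReal_one |>.le
  have hπ1 : ∑' i, ENNReal.ofReal (π i) = 1 :=
    (ENNReal.tsum_ofReal_eq_of_hasSum hπ_nonneg hπ_sum).trans ENNReal.ofReal_one
  have hπ : ∀ j, ∑' i, ENNReal.ofReal (π i) * Q i j = ENNReal.ofReal (π j) := fun j => by
    simp_rw [Q, ← ENNReal.ofReal_mul (hπ_nonneg _)]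
    exact ENNReal.tsum_ofReal_eq_of_hasSum (fun i => mul_nonneg (hπ_nonneg i) (hp_nonneg i j))
      (hπ_stat j)
  have hirrQ : ∀ i j, ∃ n, ennTaboo Q ∅ (n + 1) i j ≠ 0 := fun i j => by
    obtain ⟨n, hn, hpos⟩ := hirr i j
    obtain ⟨m, rfl⟩ := Nat.exists_eq_add_of_le' hn
    refine ⟨m, fun h => ?_⟩
    rw [nstep, tabooP_succ_eq_toReal hp_nonneg hQ, h, ENNReal.toReal_zero] at hpos
    exact hpos.false
  have key := eq_mul_tsum_ennTaboo hQ hπ (by simp [hπ1]) (by simp [hπ1]) hirrQ b₀ j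
  rw [← ENNReal.toReal_ofReal (hπ_nonneg j), key, ENNReal.toReal_mul,
    ENNReal.toReal_ofReal (hπ_nonneg b₀), ENNReal.tsum_toReal_eq (ennTaboo_succ_ne_top hQ · b₀ j)]
  simp_rw [tabooP_succ_eq_toReal hp_nonneg hQ]
  rfl

/-- Identity used in the proof of Proposition 4.3: for an irreducible chain with stationary
distribution `π`, `π_j = π_{b₀} Σ_{n ≥ 1} p^{(n),{b₀}}_{b₀ j}`, i.e. `π_j / π_{b₀}` is the
expected number of visits to `j` during an excursion from `b₀` back to `b₀`. -/
theorem stmt_9 {S : Type*} [Countable S] (p : S → S → ℝ)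
    (hp_nonneg : ∀ i j, 0 ≤ p i j)
    (hp_row : ∀ i, HasSum (fun j => p i j) 1)
    (hirr : ∀ i j, ∃ n, 1 ≤ n ∧ 0 < nstep p n i j)
    (π : S → ℝ) (hπ_nonneg : ∀ j, 0 ≤ π j) (hπ_sum : HasSum π 1)
    (hπ_stat : ∀ j, HasSum (fun i => π i * p i j) (π j)) :
    ∀ b₀ j : S, π j = π b₀ * ∑' n : ℕ, tabooP p ({b₀} : Set S) (n + 1) b₀ j :=
  stmt_9_general p hp_nonneg hp_row hirr π hπ_nonneg hπ_sum hπ_stat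
end

section
/- Let S = ℤ ∪ {∞} and let p be the stochastic matrix on S defined from data β, γ as in the context. If γ_n → 1 as |n| → ∞, then the weighted spectral gap inequality fails for every choice of data: there exist no function t : S → (0,∞), finite subset B ⊆ S, and constant ρ ∈ (0,1) such that Σ_{j∈S} p(i,j)·t_j ≤ ρ·t_i for every i ∈ S∖B. (First claim of Example 1.5.) -/
/-!
From a state `n ∈ ℤ` the chain either stays put or jumps to `∞`, so
`∑ⱼ p(n,j) t_j = (1 - γ_n) t_∞ + γ_n t_n > γ_n t_n`. Since `γ_n → 1 > ρ`, all but finitely many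
`n` have `γ_n > ρ`, and any such `n` outside the finite set `B` violates the inequality.
-/

/-- The stochastic matrix of Example 1.5 on the state space `S = ℤ ∪ {∞}`
(`none` plays the role of `∞`): `p(∞,n) = β_n`, `p(n,n) = γ_n`, `p(n,∞) = 1 - γ_n`,
and all other entries vanish. -/
noncomputable def exP (β γ : ℤ → ℝ) : Option ℤ → Option ℤ → ℝ
  | none, none => 0
  | none, some n => β n
  | some n, none => 1 - γ n
  | some n, some m => if n = m then γ n else 0

theorem tsum_exP_some_mul (β γ : ℤ → ℝ) (t : Option ℤ → ℝ) (n : ℤ) :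
    ∑' j, exP β γ (some n) j * t j = (1 - γ n) * t none + γ n * t (some n) := by
  rw [tsum_eq_sum (s := {none, some n})]
  · simp [exP]
  · rintro (_ | m) hm
    · simp at hm
    · have hnm : n ≠ m := by rintro rfl; simp at hm
      simp [exP, hnm]

theorem mul_lt_tsum_exP_some_mul {β γ : ℤ → ℝ} {t : Option ℤ → ℝ} {n : ℤ} {ρ : ℝ}
    (hγ1 : γ n < 1) (hρ : ρ < γ n) (ht : ∀ i, 0 < t i) :
    ρ * t (some n) < ∑' j, exP β γ (some n) j * t j := by
  rw [tsum_exP_some_mul]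
  have h_jump : 0 < (1 - γ n) * t none := mul_pos (sub_pos.2 hγ1) (ht none)
  have h_stay : ρ * t (some n) < γ n * t (some n) := mul_lt_mul_of_pos_right hρ (ht (some n))
  linarith

theorem stmt_11_general (β γ : ℤ → ℝ)
    (hγ1 : ∀ n, γ n < 1)
    (hγ_lim : Filter.Tendsto γ Filter.cofinite (nhds 1)) :
    ¬ ∃ (t : Option ℤ → ℝ) (B : Set (Option ℤ)) (ρ : ℝ),
        (∀ i, 0 < t i) ∧ B.Finite ∧ 0 < ρ ∧ ρ < 1 ∧
          ∀ i ∉ B, Summable (fun j => exP β γ i j * t j) ∧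
            ∑' j, exP β γ i j * t j ≤ ρ * t i := by
  rintro ⟨t, B, ρ, ht, hB, -, hρ1, h⟩
  obtain ⟨n, hρn, hnB⟩ : ∃ n, ρ < γ n ∧ some n ∉ B :=
    ((hγ_lim.eventually (eventually_gt_nhds hρ1)).and
      (hB.preimage (Option.some_injective ℤ).injOn).compl_mem_cofinite).exists
  exact (h _ hnB).2.not_gt (mul_lt_tsum_exP_some_mul (hγ1 n) hρn ht)

/-- First claim of Example 1.5: if `γ_n → 1` as `|n| → ∞`, then the weighted spectral gap
inequality fails for every choice of data `(t, B, ρ)`. -/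
theorem stmt_11 (β γ : ℤ → ℝ)
    (hβ_nonneg : ∀ n, 0 ≤ β n) (hβ_sum : HasSum β 1)
    (hγ0 : ∀ n, 0 ≤ γ n) (hγ1 : ∀ n, γ n < 1)
    (hγ_lim : Filter.Tendsto γ Filter.cofinite (nhds 1)) :
    ¬ ∃ (t : Option ℤ → ℝ) (B : Set (Option ℤ)) (ρ : ℝ),
        (∀ i, 0 < t i) ∧ B.Finite ∧ 0 < ρ ∧ ρ < 1 ∧
          ∀ i ∉ B, Summable (fun j => exP β γ i j * t j) ∧
            ∑' j, exP β γ i j * t j ≤ ρ * t i :=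
  stmt_11_general β γ hγ1 hγ_lim
end

section
/- Let S = ℤ ∪ {∞} and let p be the stochastic matrix on S defined from data β, γ as in the context. Suppose μ := Σ_{n∈ℤ} Σ_{k=0}^{∞} β_n·γ_n^k·(1−γ_n)·(k+2) < ∞. Then the chain is positive recurrent: it admits a stationary probability distribution π, given explicitly by π_∞ = 1/μ and π_n = β_n/(μ·(1−γ_n)) for n ∈ ℤ; i.e., π_j ≥ 0 for all j, Σ_{j∈S} π_j = 1 and Σ_{i∈S} π_i p(i,j) = π_j for every j ∈ S. (Second claim of Example 1.5: a chain without the weighted spectral gap property can still have an invariant distribution.) -/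
/-!
Summing `γ_n^k (1 - γ_n) (k + 2)` over `k` gives `1 + 1 / (1 - γ_n)`, so the hypothesis on `μ`
says `Σ_n β_n / (1 - γ_n) = μ - 1`; in particular `μ ≥ 1 > 0`. For every constant `c`, the
measure `π_∞ = c`, `π_n = c β_n / (1 - γ_n)` is invariant: the flow into `∞` is
`Σ_n π_n (1 - γ_n) = c Σ_n β_n = c`, and the flow into `n` is `π_n γ_n + c β_n = π_n`.
Its total mass is `c μ`, so `c = 1 / μ` normalises it.
-/

theorem HasSum.option {α M : Type*} [AddCommMonoid M] [TopologicalSpace M] [ContinuousAdd M]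
    {f : Option α → M} {a : M} (h : HasSum (fun n => f (some n)) a) :
    HasSum f (a + f none) := by
  rw [← (Equiv.optionEquivSumPUnit.{0} α).symm.hasSum_iff]
  exact h.sum (hasSum_unique _)

theorem hasSum_pow_mul_one_sub_mul_coe_add_two {𝕜 : Type*} [NormedField 𝕜] [CompleteSpace 𝕜]
    {r : 𝕜} (hr : ‖r‖ < 1) :
    HasSum (fun k : ℕ => r ^ k * (1 - r) * ((k : 𝕜) + 2)) (1 + 1 / (1 - r)) := by
  have hr1 : 1 - r ≠ 0 := by
    rw [sub_ne_zero]; rintro rfl; simp at hr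
  have h := ((hasSum_coe_mul_geometric_of_norm_lt_one hr).add
    ((hasSum_geometric_of_norm_lt_one hr).mul_left 2)).mul_left (1 - r)
  rw [show (1 - r) * (r / (1 - r) ^ 2 + 2 * (1 - r)⁻¹) = 1 + 1 / (1 - r) by
    field_simp; ring] at h
  exact h.congr_fun fun k => by ring

section ExP

variable {β γ : ℤ → ℝ}

theorem hasSum_div_one_sub_of_hasSum_returnTime (hβ : HasSum β 1) (hγ : ∀ n, |γ n| < 1)
    {μ : ℝ} (hμ : HasSum (fun x : ℤ × ℕ =>
      β x.1 * γ x.1 ^ x.2 * (1 - γ x.1) * ((x.2 : ℝ) + 2)) μ) :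
    HasSum (fun n => β n / (1 - γ n)) (μ - 1) := by
  have hfiber (n : ℤ) : HasSum (fun k : ℕ => β n * γ n ^ k * (1 - γ n) * ((k : ℝ) + 2))
      (β n + β n / (1 - γ n)) := by
    have h := (hasSum_pow_mul_one_sub_mul_coe_add_two (hγ n)).mul_left (β n)
    rw [mul_add, mul_one_div, mul_one] at h
    exact h.congr_fun fun k => by ring
  simpa using (hμ.prod_fiberwise hfiber).sub hβ

theorem exP_hasSum_invariant (hβ : HasSum β 1) (hγ : ∀ n, γ n ≠ 1) (c : ℝ)
    {π : Option ℤ → ℝ} (hπ_none : π none = c)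
    (hπ_some : ∀ n, π (some n) = c * β n / (1 - γ n)) :
    ∀ j, HasSum (fun i => π i * exP β γ i j) (π j) := by
  have hγ' (n : ℤ) : 1 - γ n ≠ 0 := sub_ne_zero.2 (hγ n).symm
  rintro (_ | m)
  · have hsome : HasSum (fun n => π (some n) * exP β γ (some n) none) c := by
      refine (mul_one c ▸ hβ.mul_left c).congr_fun fun n => ?_
      rw [exP, hπ_some]
      field_simp [hγ' n]
    have h := hsome.option (f := fun i => π i * exP β γ i none)
    rwa [show exP β γ none none = 0 from rfl, mul_zero, add_zero, ← hπ_none] at h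
  · have hsome : HasSum (fun n => π (some n) * exP β γ (some n) (some m)) (π (some m) * γ m) := by
      refine (hasSum_ite_eq m (π (some m) * γ m)).congr_fun fun n => ?_
      by_cases h : n = m <;> simp [exP, h]
    convert hsome.option (f := fun i => π i * exP β γ i (some m)) using 1
    rw [exP, hπ_none, hπ_some]
    field_simp [hγ' m]
    ring

end ExP

/-- Second claim of Example 1.5: if
`μ = Σ_{n ∈ ℤ} Σ_{k ≥ 0} β_n γ_n^k (1 - γ_n) (k + 2) < ∞`, then the chain is positive
recurrent, with stationary probability distribution `π_∞ = 1/μ`,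
`π_n = β_n / (μ (1 - γ_n))`. -/
theorem stmt_12 (β γ : ℤ → ℝ)
    (hβ_nonneg : ∀ n, 0 ≤ β n) (hβ_sum : HasSum β 1)
    (hγ0 : ∀ n, 0 ≤ γ n) (hγ1 : ∀ n, γ n < 1)
    (μ : ℝ)
    (hμ : HasSum (fun x : ℤ × ℕ =>
      β x.1 * γ x.1 ^ x.2 * (1 - γ x.1) * ((x.2 : ℝ) + 2)) μ)
    (π : Option ℤ → ℝ)
    (hπ_inf : π none = 1 / μ)
    (hπ_int : ∀ n : ℤ, π (some n) = β n / (μ * (1 - γ n))) :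
    (∀ j, 0 ≤ π j) ∧ HasSum π 1 ∧
      ∀ j, HasSum (fun i => π i * exP β γ i j) (π j) := by
  have hγ_pos (n : ℤ) : 0 < 1 - γ n := sub_pos.2 (hγ1 n)
  have hs := hasSum_div_one_sub_of_hasSum_returnTime hβ_sum
    (fun n => abs_lt.2 ⟨by linarith [hγ0 n], hγ1 n⟩) hμ
  have hμ_pos : 0 < μ := by
    linarith [hs.nonneg fun n => div_nonneg (hβ_nonneg n) (hγ_pos n).le]
  have hπ_some (n : ℤ) : π (some n) = 1 / μ * β n / (1 - γ n) := by
    rw [hπ_int, one_div_mul_eq_div, div_div]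
  refine ⟨?_, ?_, exP_hasSum_invariant hβ_sum (fun n => (hγ1 n).ne) (1 / μ) hπ_inf hπ_some⟩
  · rintro (_ | n)
    · rw [hπ_inf]; positivity
    · rw [hπ_int]; exact div_nonneg (hβ_nonneg n) (mul_pos hμ_pos (hγ_pos n)).le
  · have h := HasSum.option (f := π) <| (hs.mul_left (1 / μ)).congr_fun fun n => by
      rw [hπ_some, mul_div_assoc]
    convert h using 1
    rw [hπ_inf]
    field_simp
    ring
end
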